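/- Let G be the set of functions V → V (V = {0, 1/2, 1}) generated from the identity function by closure under pointwise negation (¬p = 1-p), pointwise max, pointwise min, and composition with ◇₂ (◇₂: 1↦1, 1/2↦0, 0↦0). Then the function h : V → V defined by h(1) = 1/2, h(1/2) = 1, h(0) = 0 does not belong to G. -/

import Mathlib

/-- The three Kleene truth values 0, 1/2, 1. -/
inductive Tv | zero | half | one
deriving DecidableEq

/-- Kleene negation ¬p = 1 - p. -/
def tneg : Tv → Tv
  | .zero => .one | .half => .half | .one => .zero

/-- Max with respect to 0 < 1/2 < 1 (disjunction). -/
def tmax : Tv → Tv → Tv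
  | .one, _ => .one | _, .one => .one
  | .half, _ => .half | _, .half => .half
  | .zero, .zero => .zero

/-- Min with respect to 0 < 1/2 < 1 (conjunction). -/
def tmin : Tv → Tv → Tv
  | .zero, _ => .zero | _, .zero => .zero
  | .half, _ => .half | _, .half => .half
  | .one, .one => .one

/-- ◇₂ : 1 ↦ 1, 1/2 ↦ 0, 0 ↦ 0. -/
def td2 : Tv → Tv
  | .one => .one | .half => .zero | .zero => .zero

/-- The clone of unary functions generated from the identity under pointwise
    negation, max, min, and composition with ◇₂ (formulas of K₃ˢ + ◇₂ in one variable). -/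
inductive InG : (Tv → Tv) → Prop
  | id : InG id
  | neg : ∀ f, InG f → InG (fun p => tneg (f p))
  | max : ∀ f g, InG f → InG g → InG (fun p => tmax (f p) (g p))
  | min : ∀ f g, InG f → InG g → InG (fun p => tmin (f p) (g p))
  | dia : ∀ f, InG f → InG (fun p => td2 (f p))


/-! Every connective of the clone maps classical values (0 and 1) to classical values, so every
member of `InG` sends the classical input 1 to a classical output; `h 1 = 1/2` is not. -/

theorem tneg_ne_half {a : Tv} (ha : a ≠ .half) : tneg a ≠ .half := by
  cases a <;> simp_all [tneg]

theorem tmax_ne_half {a b : Tv} (ha : a ≠ .half) (hb : b ≠ .half) : tmax a b ≠ .half := by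
  cases a <;> cases b <;> simp_all [tmax]

theorem tmin_ne_half {a b : Tv} (ha : a ≠ .half) (hb : b ≠ .half) : tmin a b ≠ .half := by
  cases a <;> cases b <;> simp_all [tmin]

theorem td2_ne_half (a : Tv) : td2 a ≠ .half := by
  cases a <;> simp [td2]

theorem InG.ne_half_of_ne_half {f : Tv → Tv} (hf : InG f) {p : Tv} (hp : p ≠ .half) :
    f p ≠ .half := by
  induction hf with
  | id => exact hp
  | neg _ _ ih => exact tneg_ne_half ih
  | max _ _ _ _ ihf ihg => exact tmax_ne_half ihf ihg
  | min _ _ _ _ ihf ihg => exact tmin_ne_half ihf ihg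
  | dia f _ _ => exact td2_ne_half (f p)

theorem not_definable_with_d2 :
    ¬ InG (fun p => match p with | .one => .half | .half => .one | .zero => .zero) :=
  fun h => h.ne_half_of_ne_half (p := .one) (by decide) rfl
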